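/- arXiv:1107.4365 — 3 statements merged into one kernel-verified Lean document; each statement's English description precedes it below -/
import Mathlib

section
/- Let R = k[X] be a polynomial algebra over a field k in an infinite set X of indeterminates, R₁ the space of homogeneous degree-one polynomials, and M₁,…,M_p pairwise distinct monomials of a common degree d. Then the subspace U = {(L₁,…,L_p) ∈ R₁^p | ∑ᵢ LᵢMᵢ = 0} of R₁^p is finite-dimensional over k. -/
/-!
Let `S` be the finite set of variables occurring in some `Mᵢ`. If `(L₁, …, L_p) ∈ U` and
`x ∉ S`, the coefficient of `x Mᵢ` in `∑ⱼ Lⱼ Mⱼ` is the coefficient of `x` in `Lᵢ`: a monomial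
`Mⱼ` dividing `x Mᵢ` but not involving `x` divides `Mᵢ`, hence equals it, having the same degree.
So every `Lᵢ` is a linear form in the variables of `S`, and `U` lies in the finite-dimensional
space `(span S)^p`.
-/

open MvPolynomial

namespace Finsupp

variable {σ : Type*}

theorem eq_of_le_of_degree_eq {a b : σ →₀ ℕ} (hle : a ≤ b) (hdeg : a.degree = b.degree) :
    a = b := by
  have hsplit : a + (b - a) = b := add_tsub_cancel_of_le hle
  have hzero : (b - a).degree = 0 := by
    have := congrArg degree hsplit
    rw [map_add] at this
    omega
  rw [← hsplit, (degree_eq_zero_iff _).mp hzero, add_zero]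

theorem exists_eq_single_of_degree_eq_one {a : σ →₀ ℕ} (h : a.degree = 1) :
    ∃ x, a = single x 1 := by
  obtain ⟨x, hx⟩ : a.support.Nonempty :=
    support_nonempty_iff.mpr fun h0 => by simp [h0] at h
  refine ⟨x, (eq_of_le_of_degree_eq ?_ (by rw [h, degree_single])).symm⟩
  simpa [single_le_iff, Nat.one_le_iff_ne_zero] using hx

theorem le_of_le_single_add {a b : σ →₀ ℕ} {x : σ} {n : ℕ} (hx : a x = 0)
    (h : a ≤ single x n + b) : a ≤ b := by
  intro y
  rcases eq_or_ne y x with rfl | hy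
  · simp [hx]
  · simpa [single_apply, hy.symm] using h y

end Finsupp

namespace MvPolynomial

variable {σ R ι : Type*} [CommSemiring R] [Fintype ι]

theorem coeff_single_add_sum_monomial_mul {m : ι → σ →₀ ℕ} (hm : Function.Injective m)
    {d : ℕ} (hdeg : ∀ i, (m i).degree = d) {x : σ} (hx : ∀ j, m j x = 0)
    (L : ι → MvPolynomial σ R) (i : ι) :
    coeff (Finsupp.single x 1 + m i) (∑ j, monomial (m j) 1 * L j) =
      coeff (Finsupp.single x 1) (L i) := by
  classical
  rw [coeff_sum, Finset.sum_eq_single_of_mem i (Finset.mem_univ i)]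
  · rw [coeff_monomial_mul', if_pos le_add_self, add_tsub_cancel_right, one_mul]
  · intro j _ hji
    rw [coeff_monomial_mul', if_neg]
    intro hle
    exact hji (hm (Finsupp.eq_of_le_of_degree_eq (Finsupp.le_of_le_single_add (hx j) hle)
      ((hdeg j).trans (hdeg i).symm)))

theorem mem_span_X_image_of_isHomogeneous_one {f : MvPolynomial σ R} (hf : f.IsHomogeneous 1)
    {S : Set σ} (hS : ∀ x ∉ S, coeff (Finsupp.single x 1) f = 0) :
    f ∈ Submodule.span R (X '' S) := by
  rw [f.as_sum]
  refine Submodule.sum_mem _ fun a ha => ?_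
  have hdeg : a.degree = 1 := by
    by_contra hne
    exact mem_support_iff.mp ha (hf.coeff_eq_zero hne)
  obtain ⟨x, rfl⟩ := Finsupp.exists_eq_single_of_degree_eq_one hdeg
  have hx : x ∈ S := by
    by_contra hx
    exact mem_support_iff.mp ha (hS x hx)
  rw [← C_mul_X_eq_monomial, ← smul_eq_C_mul]
  exact Submodule.smul_mem _ _ (Submodule.subset_span (Set.mem_image_of_mem X hx))

end MvPolynomial

instance Submodule.finiteDimensional_pi_univ {K ι : Type*} [DivisionRing K] [Finite ι]
    {φ : ι → Type*} [∀ i, AddCommGroup (φ i)] [∀ i, Module K (φ i)]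
    (p : ∀ i, Submodule K (φ i)) [∀ i, FiniteDimensional K (p i)] :
    FiniteDimensional K (Submodule.pi Set.univ p) := by
  classical
  rw [← Submodule.iSup_map_single]
  infer_instance

theorem daigle_lemma_general {k : Type*} [Field k] {X : Type*}
    (p d : ℕ) (m : Fin p → (X →₀ ℕ)) (hm : Function.Injective m)
    (hdeg : ∀ i, (m i).sum (fun _ e => e) = d) :
    FiniteDimensional k
      ↥((Submodule.pi Set.univ (fun _ : Fin p => MvPolynomial.homogeneousSubmodule X k 1)) ⊓
        (LinearMap.ker (∑ i : Fin p,
          (LinearMap.mulLeft k (MvPolynomial.monomial (m i) (1 : k))).comp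
            (LinearMap.proj i) : (Fin p → MvPolynomial X k) →ₗ[k] MvPolynomial X k))) := by
  set S : Set X := ⋃ i, ↑(m i).support
  have hS : S.Finite := Set.finite_iUnion fun i => (m i).support.finite_toSet
  have : FiniteDimensional k (Submodule.span k (MvPolynomial.X '' S : Set (MvPolynomial X k))) :=
    FiniteDimensional.span_of_finite k (hS.image _)
  refine Submodule.finiteDimensional_of_le
    (S₂ := Submodule.pi Set.univ fun _ => Submodule.span k (MvPolynomial.X '' S)) ?_
  rintro L ⟨hhom, hker⟩ i -
  refine mem_span_X_image_of_isHomogeneous_one (hhom i trivial) fun x hx => ?_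
  have hmx : ∀ j, m j x = 0 := by simpa [S] using hx
  rw [← coeff_single_add_sum_monomial_mul hm hdeg hmx L i]
  simpa [LinearMap.sum_apply] using congrArg (coeff (Finsupp.single x 1 + m i)) hker

/-- Daigle's lemma: in a polynomial ring over a field `k` in an infinite set `X` of
indeterminates, if `M₁, …, M_p` are pairwise distinct monomials of a common degree `d`, then
`U = {(L₁,…,L_p) ∈ R₁^p | ∑ᵢ Lᵢ Mᵢ = 0}` is a finite-dimensional subspace of `R₁^p`. -/
theorem daigle_lemma {k : Type*} [Field k] {X : Type*} [Infinite X]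
    (p d : ℕ) (m : Fin p → (X →₀ ℕ)) (hm : Function.Injective m)
    (hdeg : ∀ i, (m i).sum (fun _ e => e) = d) :
    FiniteDimensional k
      ↥((Submodule.pi Set.univ (fun _ : Fin p => MvPolynomial.homogeneousSubmodule X k 1)) ⊓
        (LinearMap.ker (∑ i : Fin p,
          (LinearMap.mulLeft k (MvPolynomial.monomial (m i) (1 : k))).comp
            (LinearMap.proj i) : (Fin p → MvPolynomial X k) →ₗ[k] MvPolynomial X k))) :=
  daigle_lemma_general p d m hm hdeg
end

section
/- Let V be a module for Vir ⊗ A on which c ⊗ f acts by zero for all f ∈ J (J an ideal of A with J² = 0), and suppose N ∈ ℕ and f ∈ J satisfy (d₀ ⊗ f)^N · V = 0. Then for all 0 ≤ r ≤ N and all nonzero integers i₁,…,i_r: (d_{i₁} ⊗ f)⋯(d_{i_r} ⊗ f)(d₀ ⊗ f)^{N−r} · V = 0. In particular (d_{i₁} ⊗ f)⋯(d_{i_N} ⊗ f)·V = 0 for all i₁,…,i_N ∈ ℤ. -/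
/-!
Write `T n` and `E n` for the actions of `f ⊗ d n` and `1 ⊗ d n`. Since `f² = 0` the `T n`
commute, and since `c ⊗ J` acts by zero, `[E j, T m] = (m - j) T (j + m)`. Induct on the number
`r` of factors, assuming every monomial of degree `r - 1` in the `T`'s is killed by
`T 0 ^ (N - r + 1)`. Commutation with `E j` maps the span of these monomials to itself, so applying
`[E j, ·]` to `T_{i₂} ⋯ T_{i_r} T 0 ^ (N - r + 1) = 0` leaves only the term where `E j` hits the
power of `T 0`, namely `-(N - r + 1) j T j T_{i₂} ⋯ T_{i_r} T 0 ^ (N - r)`. For `j ≠ 0` this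
kills `T j T_{i₂} ⋯ T_{i_r} T 0 ^ (N - r)`, and for `j = 0` that product vanishes directly.
-/

open TensorProduct

theorem sub_mul_pow_succ {R : Type*} [Ring R] {e t s : R} (h : e * t - t * e = s)
    (hst : Commute s t) (n : ℕ) :
    e * t ^ (n + 1) - t ^ (n + 1) * e = (n + 1) • (s * t ^ n) := by
  induction n with
  | zero => simpa using h
  | succ n ih =>
    calc e * t ^ (n + 2) - t ^ (n + 2) * e
        = (e * t ^ (n + 1) - t ^ (n + 1) * e) * t + t ^ (n + 1) * (e * t - t * e) := by
          simp only [pow_succ _ (n + 1), mul_sub, sub_mul, mul_assoc]; abel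
      _ = (n + 2) • (s * t ^ (n + 1)) := by
          rw [ih, h, smul_mul_assoc, mul_assoc, ← pow_succ, ← (hst.pow_right (n + 1)).eq]
          exact (succ_nsmul _ (n + 1)).symm

section Monomials

variable (K : Type*) {R : Type*} [Field K] [Ring R] [Algebra K R]

def monomialSpan (T : ℤ → R) (n : ℕ) : Submodule K R :=
  Submodule.span K ((fun q : List ℤ => (q.map T).prod) '' {q | q.length = n})

variable {K} {T : ℤ → R}

theorem prod_mem_monomialSpan (q : List ℤ) : (q.map T).prod ∈ monomialSpan K T q.length :=
  Submodule.subset_span ⟨q, rfl, rfl⟩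

theorem mul_mem_monomialSpan (m : ℤ) {n : ℕ} {x : R} (hx : x ∈ monomialSpan K T n) :
    T m * x ∈ monomialSpan K T (n + 1) := by
  suffices monomialSpan K T n ≤ (monomialSpan K T (n + 1)).comap (LinearMap.mulLeft K (T m)) from
    this hx
  refine Submodule.span_le.mpr ?_
  rintro _ ⟨q, rfl, rfl⟩
  simpa using prod_mem_monomialSpan (K := K) (T := T) (m :: q)

theorem mul_eq_zero_of_mem_monomialSpan {n : ℕ} {y x : R}
    (hy : ∀ q : List ℤ, q.length = n → (q.map T).prod * y = 0)
    (hx : x ∈ monomialSpan K T n) : x * y = 0 := by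
  suffices monomialSpan K T n ≤ LinearMap.ker (LinearMap.mulRight K y) from this hx
  refine Submodule.span_le.mpr ?_
  rintro _ ⟨q, hq, rfl⟩
  exact hy q hq

variable {E : ℤ → R} (hET : ∀ j m, E j * T m - T m * E j = ((m : K) - j) • T (j + m))
include hET

theorem commutator_prod_mem_monomialSpan (j : ℤ) (q : List ℤ) :
    E j * (q.map T).prod - (q.map T).prod * E j ∈ monomialSpan K T q.length := by
  induction q with
  | nil => simp
  | cons m q ih =>
    have key : E j * (T m * (q.map T).prod) - T m * (q.map T).prod * E j
        = T m * (E j * (q.map T).prod - (q.map T).prod * E j)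
          + ((m : K) - j) • (((j + m) :: q).map T).prod := by
      rw [List.map_cons, List.prod_cons, ← smul_mul_assoc, ← hET]
      simp only [mul_sub, sub_mul, mul_assoc]; abel
    rw [List.map_cons, List.prod_cons, key]
    exact add_mem (mul_mem_monomialSpan m ih)
      (Submodule.smul_mem _ _ (prod_mem_monomialSpan (K := K) (T := T) ((j + m) :: q)))

variable [CharZero K] (hcomm : ∀ m n, Commute (T m) (T n))
include hcomm

theorem prod_mul_pow_eq_zero_of_length_succ {n k : ℕ}
    (h : ∀ q : List ℤ, q.length = n → (q.map T).prod * T 0 ^ (k + 1) = 0)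
    (q : List ℤ) (hq : q.length = n + 1) : (q.map T).prod * T 0 ^ k = 0 := by
  obtain _ | ⟨j, l⟩ := q
  · simp at hq
  have hl : l.length = n := by simpa using hq
  have hcomm_prod (m : ℤ) : Commute (T m) (l.map T).prod :=
    Commute.list_prod_right _ _ fun _ hx ↦ by
      obtain ⟨i, -, rfl⟩ := List.mem_map.mp hx
      exact hcomm m i
  have hP : (l.map T).prod * T 0 ^ (k + 1) = 0 := h l hl
  rw [List.map_cons, List.prod_cons, mul_assoc]
  rcases eq_or_ne j 0 with rfl | hj
  · rw [← mul_assoc, (hcomm_prod 0).eq, mul_assoc, ← pow_succ', hP]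
  have hE0 : E j * T 0 - T 0 * E j = (-(j : K)) • T j := by simpa using hET j 0
  have hpow := sub_mul_pow_succ hE0 ((hcomm j 0).smul_left _) k
  have hW := mul_eq_zero_of_mem_monomialSpan h (hl ▸ commutator_prod_mem_monomialSpan hET j l)
  have hzero : (-((k + 1 : K) * j)) • (T j * ((l.map T).prod * T 0 ^ k)) = 0 := by
    calc (-((k + 1 : K) * j)) • (T j * ((l.map T).prod * T 0 ^ k))
        = (l.map T).prod * (E j * T 0 ^ (k + 1) - T 0 ^ (k + 1) * E j) := by
          rw [hpow, ← Nat.cast_smul_eq_nsmul K, smul_mul_assoc, mul_smul_comm, mul_smul_comm,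
            smul_smul, ← mul_assoc _ (T j), ← (hcomm_prod j).eq, mul_assoc]
          push_cast; ring_nf
      _ = E j * ((l.map T).prod * T 0 ^ (k + 1))
            - (E j * (l.map T).prod - (l.map T).prod * E j) * T 0 ^ (k + 1)
            - (l.map T).prod * T 0 ^ (k + 1) * E j := by
          simp only [mul_sub, sub_mul, mul_assoc]; abel
      _ = 0 := by rw [hP, hW]; simp
  refine (smul_eq_zero.mp hzero).resolve_left ?_
  exact neg_ne_zero.mpr (mul_ne_zero (by exact_mod_cast k.succ_ne_zero) (by exact_mod_cast hj))

theorem prod_mul_pow_eq_zero {N : ℕ} (hN : T 0 ^ N = 0) (q : List ℤ) (hq : q.length ≤ N) :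
    (q.map T).prod * T 0 ^ (N - q.length) = 0 := by
  obtain ⟨r, hr⟩ : ∃ r, q.length = r := ⟨_, rfl⟩
  induction r generalizing q with
  | zero => simp [List.length_eq_zero_iff.mp hr, hN]
  | succ r ih =>
    rw [hr] at hq ⊢
    refine prod_mul_pow_eq_zero_of_length_succ hET hcomm (fun q' hq' ↦ ?_) q hr
    have := ih q' (by omega) hq'
    rwa [hq', show N - r = N - (r + 1) + 1 by omega] at this

end Monomials

theorem toEnd_tmul_mul_sub {K A L V : Type*} [CommRing K] [CommRing A] [Algebra K A]
    [LieRing L] [LieAlgebra K L] [LieAlgebra K (A ⊗[K] L)] [AddCommGroup V] [Module K V]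
    [LieRingModule (A ⊗[K] L) V] [LieModule K (A ⊗[K] L) V] (a b : A) (x y : L) :
    LieModule.toEnd K (A ⊗[K] L) V (a ⊗ₜ x) * LieModule.toEnd K (A ⊗[K] L) V (b ⊗ₜ y)
      - LieModule.toEnd K (A ⊗[K] L) V (b ⊗ₜ y) * LieModule.toEnd K (A ⊗[K] L) V (a ⊗ₜ x)
      = LieModule.toEnd K (A ⊗[K] L) V ((a * b) ⊗ₜ ⁅x, y⁆) := by
  ext v
  simp only [LinearMap.sub_apply, Module.End.mul_apply, LieModule.toEnd_apply_apply, ← lie_lie,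
    LieAlgebra.ExtendScalars.bracket_tmul]

/- The `K`-module structure carried by the `LieAlgebra K (A ⊗[K] L)` instance need not be the
tensor product one, so scalars are moved out of the tensor as integers. -/
theorem toEnd_tmul_intCast_smul {K A L V : Type*} [CommRing K] [CommRing A] [Algebra K A]
    [LieRing L] [LieAlgebra K L] [LieAlgebra K (A ⊗[K] L)] [AddCommGroup V] [Module K V]
    [LieRingModule (A ⊗[K] L) V] [LieModule K (A ⊗[K] L) V] (a : A) (z : ℤ) (x : L) :
    LieModule.toEnd K (A ⊗[K] L) V (a ⊗ₜ ((z : K) • x))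
      = (z : K) • LieModule.toEnd K (A ⊗[K] L) V (a ⊗ₜ x) := by
  rw [Int.cast_smul_eq_zsmul, Int.cast_smul_eq_zsmul, ← map_zsmul]
  exact congrArg _ (map_zsmul (TensorProduct.mk K A L a) z x)

theorem square_zero_ideal_nilpotency_general
    {L : Type*} [LieRing L] [LieAlgebra ℂ L] (c : L) (d : ℤ → L)
    (hdd : ∀ m n : ℤ, ⁅d m, d n⁆ = ((n : ℂ) - (m : ℂ)) • d (m + n)
      + (if m + n = 0 then (((m : ℂ) ^ 3 - (m : ℂ)) / 12) else 0) • c)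
    {A : Type*} [CommRing A] [Algebra ℂ A]
    [LieAlgebra ℂ (A ⊗[ℂ] L)]
    {V : Type*} [AddCommGroup V] [Module ℂ V]
    [LieRingModule (A ⊗[ℂ] L) V] [LieModule ℂ (A ⊗[ℂ] L) V]
    (J : Ideal A) (hJ2 : J * J = ⊥)
    (hc : ∀ g ∈ J, ∀ v : V, ⁅(g ⊗ₜ[ℂ] c : A ⊗[ℂ] L), v⁆ = 0)
    (f : A) (hf : f ∈ J) (N : ℕ)
    (hN : ∀ v : V,
      ((LieModule.toEnd ℂ (A ⊗[ℂ] L) V (f ⊗ₜ[ℂ] d 0)) ^ N) v = 0) :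
    (∀ r : ℕ, r ≤ N → ∀ i : Fin r → ℤ, (∀ j, i j ≠ 0) → ∀ v : V,
      ((List.ofFn fun j =>
          LieModule.toEnd ℂ (A ⊗[ℂ] L) V (f ⊗ₜ[ℂ] d (i j))).prod *
        (LieModule.toEnd ℂ (A ⊗[ℂ] L) V (f ⊗ₜ[ℂ] d 0)) ^ (N - r)) v = 0) ∧
    (∀ i : Fin N → ℤ, ∀ v : V,
      ((List.ofFn fun j =>
          LieModule.toEnd ℂ (A ⊗[ℂ] L) V (f ⊗ₜ[ℂ] d (i j))).prod) v = 0) := by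
  set T : ℤ → Module.End ℂ V := fun n ↦ LieModule.toEnd ℂ (A ⊗[ℂ] L) V (f ⊗ₜ d n)
  set E : ℤ → Module.End ℂ V := fun n ↦ LieModule.toEnd ℂ (A ⊗[ℂ] L) V ((1 : A) ⊗ₜ d n)
  have hff : f * f = 0 := by simpa [hJ2] using Ideal.mul_mem_mul hf hf
  have hcomm (m n : ℤ) : Commute (T m) (T n) :=
    sub_eq_zero.mp <| by simp only [T, toEnd_tmul_mul_sub, hff, zero_tmul, map_zero]
  have hET (j m : ℤ) : E j * T m - T m * E j = ((m : ℂ) - j) • T (j + m) := by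
    have hcf (μ : ℂ) : LieModule.toEnd ℂ (A ⊗[ℂ] L) V (f ⊗ₜ (μ • c)) = 0 := by
      ext v
      rw [← smul_tmul]
      exact hc _ (Submodule.smul_of_tower_mem J μ hf) v
    simp only [T, E]
    rw [toEnd_tmul_mul_sub, one_mul, hdd, tmul_add, map_add, hcf, add_zero]
    simpa using toEnd_tmul_intCast_smul (K := ℂ) (V := V) f (m - j) (d (j + m))
  have hmain := prod_mul_pow_eq_zero hET hcomm (LinearMap.ext hN)
  refine ⟨fun r hr i _ v ↦ ?_, fun i v ↦ ?_⟩
  · have := hmain (List.ofFn i) (by simpa using hr)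
    rw [List.length_ofFn, List.map_ofFn] at this
    exact LinearMap.congr_fun this v
  · have := hmain (List.ofFn i) (by simp)
    rw [List.length_ofFn, List.map_ofFn, Nat.sub_self, pow_zero, mul_one] at this
    exact LinearMap.congr_fun this v

/-- Let `J ⊴ A` be an ideal with `J² = 0`, and `V` a `(Vir ⊗ A)`-module on which `c ⊗ g` acts
by zero for all `g ∈ J`.  If `f ∈ J` and `N ∈ ℕ` satisfy `(d₀ ⊗ f)^N · V = 0`, then for all
`0 ≤ r ≤ N` and nonzero integers `i₁, …, i_r` we have
`(d_{i₁} ⊗ f) ⋯ (d_{i_r} ⊗ f)(d₀ ⊗ f)^{N−r} · V = 0`.  In particular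
`(d_{i₁} ⊗ f) ⋯ (d_{i_N} ⊗ f) · V = 0` for all `i₁, …, i_N ∈ ℤ`. -/
theorem square_zero_ideal_nilpotency
    {L : Type*} [LieRing L] [LieAlgebra ℂ L] (c : L) (d : ℤ → L)
    (hli : LinearIndependent ℂ (fun o : Option ℤ => o.elim c d))
    (hspan : Submodule.span ℂ (Set.range (fun o : Option ℤ => o.elim c d)) = ⊤)
    (hdc : ∀ n : ℤ, ⁅d n, c⁆ = 0)
    (hdd : ∀ m n : ℤ, ⁅d m, d n⁆ = ((n : ℂ) - (m : ℂ)) • d (m + n)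
      + (if m + n = 0 then (((m : ℂ) ^ 3 - (m : ℂ)) / 12) else 0) • c)
    {A : Type*} [CommRing A] [Algebra ℂ A]
    [LieAlgebra ℂ (A ⊗[ℂ] L)]
    {V : Type*} [AddCommGroup V] [Module ℂ V]
    [LieRingModule (A ⊗[ℂ] L) V] [LieModule ℂ (A ⊗[ℂ] L) V]
    (J : Ideal A) (hJ2 : J * J = ⊥)
    (hc : ∀ g ∈ J, ∀ v : V, ⁅(g ⊗ₜ[ℂ] c : A ⊗[ℂ] L), v⁆ = 0)
    (f : A) (hf : f ∈ J) (N : ℕ)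
    (hN : ∀ v : V,
      ((LieModule.toEnd ℂ (A ⊗[ℂ] L) V (f ⊗ₜ[ℂ] d 0)) ^ N) v = 0) :
    (∀ r : ℕ, r ≤ N → ∀ i : Fin r → ℤ, (∀ j, i j ≠ 0) → ∀ v : V,
      ((List.ofFn fun j =>
          LieModule.toEnd ℂ (A ⊗[ℂ] L) V (f ⊗ₜ[ℂ] d (i j))).prod *
        (LieModule.toEnd ℂ (A ⊗[ℂ] L) V (f ⊗ₜ[ℂ] d 0)) ^ (N - r)) v = 0) ∧
    (∀ i : Fin N → ℤ, ∀ v : V,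
      ((List.ofFn fun j =>
          LieModule.toEnd ℂ (A ⊗[ℂ] L) V (f ⊗ₜ[ℂ] d (i j))).prod) v = 0) :=
  square_zero_ideal_nilpotency_general c d hdd J hJ2 hc f hf N hN
end

section
/- In the universal enveloping algebra of 𝒱 = Vir ⊗ A, for any ideal J ⊴ A and any M ∈ ℕ₊, one has (U(𝒱)·(Vir ⊗ J)·U(𝒱))^M = U(𝒱)·(Vir ⊗ J)^M·U(𝒱), where powers are taken in U(𝒱). -/
/-! Because `𝔦 = Vir ⊗ J` is a Lie ideal, `i * x = x * i + [i, x]` with `[i, x] ∈ 𝔦` for `i ∈ 𝔦`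
and `x ∈ 𝒱`; since `ι 𝒱` generates `U(𝒱)`, this gives `𝔦 U ⊆ U 𝔦`, and by induction
`𝔦 ^ k U ⊆ U 𝔦 ^ k`. Hence `U 𝔦 ^ k U = U 𝔦 ^ k` for all `k`, and
`(U 𝔦 U) ^ M = (U 𝔦) ^ M = U 𝔦 ^ M = U 𝔦 ^ M U` for `M ≥ 1`. -/

open TensorProduct

section

variable {L : Type*} [LieRing L] [LieAlgebra ℂ L]
variable {A : Type*} [CommRing A] [Algebra ℂ A] [LieAlgebra ℂ (A ⊗[ℂ] L)]

/-- The subspace `Vir ⊗ J` of `𝒱 = Vir ⊗ A` (realized as `A ⊗[ℂ] L`), viewed inside the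
universal enveloping algebra `U(𝒱)` via `ι`. -/
noncomputable def virTensorIdeal (J : Ideal A) :
    Submodule ℂ (UniversalEnvelopingAlgebra ℂ (A ⊗[ℂ] L)) :=
  Submodule.span ℂ ((UniversalEnvelopingAlgebra.ι ℂ) ''
    {x : A ⊗[ℂ] L | ∃ f ∈ J, ∃ u : L, x = f ⊗ₜ[ℂ] u})

namespace Submodule

variable {R B : Type*} [CommSemiring R] [Semiring B] [Algebra R B] {V : Submodule R B}

theorem le_top_mul (V : Submodule R B) : V ≤ ⊤ * V :=
  (one_mul V).ge.trans (mul_le_mul_left le_top V)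

theorem le_mul_top (V : Submodule R B) : V ≤ V * ⊤ :=
  (mul_one V).ge.trans (mul_le_mul_right le_top V)

theorem top_mul_mul_top_eq_of_mul_top_le (h : V * ⊤ ≤ ⊤ * V) : ⊤ * V * ⊤ = ⊤ * V := by
  refine le_antisymm ?_ (le_mul_top _)
  calc ⊤ * V * ⊤ = ⊤ * (V * ⊤) := mul_assoc _ _ _
    _ ≤ ⊤ * (⊤ * V) := by gcongr
    _ = ⊤ * ⊤ * V := (mul_assoc _ _ _).symm
    _ ≤ ⊤ * V := by gcongr; exact le_top

theorem pow_mul_top_le_of_mul_top_le (h : V * ⊤ ≤ ⊤ * V) (k : ℕ) : V ^ k * ⊤ ≤ ⊤ * V ^ k := by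
  induction k with
  | zero => simp
  | succ k ih =>
    calc V ^ (k + 1) * ⊤ = V ^ k * (V * ⊤) := by rw [pow_succ, mul_assoc]
      _ ≤ V ^ k * (⊤ * V) := by gcongr
      _ = V ^ k * ⊤ * V := (mul_assoc _ _ _).symm
      _ ≤ ⊤ * V ^ k * V := by gcongr
      _ = ⊤ * V ^ (k + 1) := by rw [mul_assoc, pow_succ]

theorem top_mul_pow_of_mul_top_le (h : V * ⊤ ≤ ⊤ * V) {k : ℕ} (hk : 0 < k) :
    (⊤ * V) ^ k = ⊤ * V ^ k := by
  induction k, hk using Nat.le_induction with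
  | base => rw [pow_one, pow_one]
  | succ k _ ih =>
    rw [pow_succ, ih, ← mul_assoc,
      top_mul_mul_top_eq_of_mul_top_le (pow_mul_top_le_of_mul_top_le h k), mul_assoc, pow_succ]

theorem top_mul_mul_top_pow_of_mul_top_le (h : V * ⊤ ≤ ⊤ * V) {k : ℕ} (hk : 0 < k) :
    (⊤ * V * ⊤) ^ k = ⊤ * V ^ k * ⊤ := by
  rw [top_mul_mul_top_eq_of_mul_top_le h, top_mul_pow_of_mul_top_le h hk,
    top_mul_mul_top_eq_of_mul_top_le (pow_mul_top_le_of_mul_top_le h k)]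

theorem mul_top_le_self_of_adjoin_eq_top {T : Submodule R B} {s : Set B}
    (hs : Algebra.adjoin R s = ⊤) (hT : ∀ t ∈ T, ∀ x ∈ s, t * x ∈ T) : T * ⊤ ≤ T := by
  let Q : Subalgebra R B :=
    { carrier := {u | ∀ t ∈ T, t * u ∈ T}
      mul_mem' := fun ha hb t ht => mul_assoc t _ _ ▸ hb _ (ha t ht)
      add_mem' := fun ha hb t ht => (mul_add t _ _).symm ▸ T.add_mem (ha t ht) (hb t ht)
      algebraMap_mem' := fun r t ht => by
        rw [← Algebra.commutes, ← Algebra.smul_def]; exact T.smul_mem r ht }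
  have hQ : ⊤ ≤ Q := hs ▸ Algebra.adjoin_le fun x hx t ht => hT t ht x hx
  exact mul_le.mpr fun t ht u _ => hQ trivial t ht

end Submodule

namespace UniversalEnvelopingAlgebra

variable {R g : Type*} [CommRing R] [LieRing g] [LieAlgebra R g]

theorem ι_lie (x y : g) : ι R ⁅x, y⁆ = ι R x * ι R y - ι R y * ι R x := by
  let := LieRing.ofAssociativeRing (A := UniversalEnvelopingAlgebra R g)
  rw [LieHom.map_lie, Ring.lie_def]

theorem adjoin_range_ι :
    Algebra.adjoin R (Set.range (ι R : g → UniversalEnvelopingAlgebra R g)) = ⊤ := by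
  have : (mkAlgHom R g).range = ⊤ := RingCon.range_mkₐ
  rw [← this, ← Algebra.map_top, ← TensorAlgebra.adjoin_range_ι, AlgHom.map_adjoin,
    ← Set.range_comp]
  rfl

/- The hypothesis uses the additive closure rather than `Submodule.span R s`, so that it does not
depend on the `R`-module structure of `g`: on `A ⊗[ℂ] L` the one carried by the `LieAlgebra`
instance need not be that of the tensor product. -/
theorem span_image_ι_mul_top_le {s : Set g}
    (hs : ∀ x ∈ s, ∀ y, ⁅x, y⁆ ∈ AddSubmonoid.closure s) :
    Submodule.span R (ι R '' s) * ⊤ ≤ ⊤ * Submodule.span R (ι R '' s) := by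
  set S := Submodule.span R (ι R '' s)
  have hι : ∀ x ∈ AddSubmonoid.closure s, ι R x ∈ S := fun x hx => by
    induction hx using AddSubmonoid.closure_induction with
    | mem x hx => exact Submodule.subset_span ⟨x, hx, rfl⟩
    | zero => rw [map_zero]; exact zero_mem S
    | add x y _ _ hx hy => rw [map_add]; exact add_mem hx hy
  have hcomm : ∀ y, ∀ a ∈ S, a * ι R y - ι R y * a ∈ S := by
    intro y
    suffices S ≤ S.comap (LinearMap.mulRight R (ι R y) - LinearMap.mulLeft R (ι R y)) from
      fun a ha => this ha
    refine Submodule.span_le.mpr ?_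
    rintro _ ⟨x, hx, rfl⟩
    simpa only [SetLike.mem_coe, Submodule.mem_comap, LinearMap.sub_apply,
      LinearMap.mulRight_apply, LinearMap.mulLeft_apply, ← ι_lie] using hι _ (hs x hx y)
  calc S * ⊤ ≤ ⊤ * S * ⊤ := by gcongr; exact Submodule.le_top_mul S
    _ ≤ ⊤ * S := by
      refine Submodule.mul_top_le_self_of_adjoin_eq_top adjoin_range_ι ?_
      rintro t ht _ ⟨y, rfl⟩
      refine Submodule.mul_induction_on ht (fun b _ a ha => ?_) (fun t t' ht ht' => ?_)
      · rw [mul_assoc, ← add_sub_cancel (ι R y * a) (a * ι R y), mul_add, ← mul_assoc]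
        exact add_mem (Submodule.mul_mem_mul trivial ha)
          (Submodule.mul_mem_mul trivial (hcomm y a ha))
      · rw [add_mul]; exact add_mem ht ht'

end UniversalEnvelopingAlgebra

omit [LieAlgebra ℂ (A ⊗[ℂ] L)] in
theorem lie_tmul_mem_closure_tmul (J : Ideal A) :
    ∀ x ∈ {x : A ⊗[ℂ] L | ∃ f ∈ J, ∃ u : L, x = f ⊗ₜ[ℂ] u}, ∀ y : A ⊗[ℂ] L,
      ⁅x, y⁆ ∈ AddSubmonoid.closure {x : A ⊗[ℂ] L | ∃ f ∈ J, ∃ u : L, x = f ⊗ₜ[ℂ] u} := by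
  rintro _ ⟨f, hf, u, rfl⟩ y
  induction y using TensorProduct.induction_on with
  | zero => rw [lie_zero]; exact zero_mem _
  | tmul b v =>
    rw [LieAlgebra.ExtendScalars.bracket_tmul]
    exact AddSubmonoid.subset_closure ⟨f * b, J.mul_mem_right b hf, ⁅u, v⁆, rfl⟩
  | add y y' hy hy' => rw [lie_add]; exact add_mem hy hy'

theorem enveloping_ideal_power_general (J : Ideal A) (M : ℕ) (hM : 0 < M) :
    ((⊤ : Submodule ℂ (UniversalEnvelopingAlgebra ℂ (A ⊗[ℂ] L))) * virTensorIdeal J * ⊤) ^ M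
      = (⊤ : Submodule ℂ (UniversalEnvelopingAlgebra ℂ (A ⊗[ℂ] L)))
          * virTensorIdeal J ^ M * ⊤ :=
  Submodule.top_mul_mul_top_pow_of_mul_top_le
    (UniversalEnvelopingAlgebra.span_image_ι_mul_top_le (lie_tmul_mem_closure_tmul J)) hM

/-- In the universal enveloping algebra of `𝒱 = Vir ⊗ A`, for any ideal `J ⊴ A` and any
`M ≥ 1`, one has `(U(𝒱)·(Vir ⊗ J)·U(𝒱))^M = U(𝒱)·(Vir ⊗ J)^M·U(𝒱)`. -/
theorem enveloping_ideal_power (c : L) (d : ℤ → L)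
    (hli : LinearIndependent ℂ (fun o : Option ℤ => o.elim c d))
    (hspan : Submodule.span ℂ (Set.range (fun o : Option ℤ => o.elim c d)) = ⊤)
    (hdc : ∀ n : ℤ, ⁅d n, c⁆ = 0)
    (hdd : ∀ m n : ℤ, ⁅d m, d n⁆ = ((n : ℂ) - (m : ℂ)) • d (m + n)
      + (if m + n = 0 then (((m : ℂ) ^ 3 - (m : ℂ)) / 12) else 0) • c)
    (J : Ideal A) (M : ℕ) (hM : 0 < M) :
    ((⊤ : Submodule ℂ (UniversalEnvelopingAlgebra ℂ (A ⊗[ℂ] L))) * virTensorIdeal J * ⊤) ^ M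
      = (⊤ : Submodule ℂ (UniversalEnvelopingAlgebra ℂ (A ⊗[ℂ] L)))
          * virTensorIdeal J ^ M * ⊤ :=
  enveloping_ideal_power_general J M hM

end
end
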